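/- Let F_0 be a continuous c.d.f. on ℝ, let a_n > 0 and b_n ∈ ℝ be normalizing sequences, and let x ∈ ℝ and G(x) ∈ (0,1] be such that lim_{n→∞} F_0^n(a_n x + b_n) = G(x). Then lim_{n→∞} (2 F_0(a_{2n} x + b_{2n}) - 1)^n = G(x). In particular, if Y has a symmetric density f_0 (so that P(|Y| ≤ t) = 2F_0(t) - 1 for t ≥ 0), then the maxima of i.i.d. copies of |Y| satisfy the same extreme-value limit as those of Y, with normalizing constants a_{2n}, b_{2n}. -/
import Mathlib


open Filter Real

/-- If `F₀` is a continuous c.d.f., `a_n > 0`, `b_n ∈ ℝ` and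
`F₀(a_n x + b_n)^n → G(x) ∈ (0,1]`, then `(2 F₀(a_{2n} x + b_{2n}) - 1)^n → G(x)`.
(In particular, for a symmetric density the maxima of `|Y|` obey the same
extreme-value limit with normalizing constants `a_{2n}, b_{2n}`.) -/
theorem abs_maxima_same_limit
    (F0 : ℝ → ℝ) (hF0cont : Continuous F0) (hF0mono : Monotone F0)
    (hF0nonneg : ∀ x, 0 ≤ F0 x) (hF0le : ∀ x, F0 x ≤ 1)
    (a b : ℕ → ℝ) (ha : ∀ n, 0 < a n)
    (x G : ℝ) (hGpos : 0 < G) (hGle : G ≤ 1)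
    (hlim : Tendsto (fun n : ℕ => (F0 (a n * x + b n)) ^ n) atTop (nhds G)) :
    Tendsto (fun n : ℕ => (2 * F0 (a (2 * n) * x + b (2 * n)) - 1) ^ n)
      atTop (nhds G) := by
  set u : ℕ → ℝ := fun n => F0 (a (2 * n) * x + b (2 * n)) with hu
  set s : ℕ → ℝ := fun n => 1 - u n with hsdef
  have hu0 : ∀ n, 0 ≤ u n := fun n => hF0nonneg _
  have hu1 : ∀ n, u n ≤ 1 := fun n => hF0le _
  have hs0 : ∀ n, 0 ≤ s n := fun n => by simp [hsdef]; exact hu1 n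
  have hs1 : ∀ n, s n ≤ 1 := fun n => by simp [hsdef]; exact hu0 n
  -- the powers along 2n converge to G
  have h2n : Tendsto (fun n : ℕ => 2 * n) atTop atTop :=
    tendsto_atTop_atTop.mpr fun c => ⟨c, fun n hn => by omega⟩
  have h1 : Tendsto (fun n => u n ^ (2 * n)) atTop (nhds G) := hlim.comp h2n
  clear_value s u
  have h2 : ∀ᶠ n in atTop, G / 2 ≤ u n ^ (2 * n) :=
    h1.eventually (eventually_ge_nhds (by linarith))
  -- bound n * s n
  have h3 : ∀ᶠ n : ℕ in atTop, (n : ℝ) * s n ≤ 1 / G := by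
    filter_upwards [h2] with n hn
    have hb : 1 + (2 * n : ℝ) * s n ≤ (1 + s n) ^ (2 * n) := by
      have := one_add_mul_le_pow (by linarith [hs0 n] : (-2:ℝ) ≤ s n) (2 * n)
      calc 1 + (2 * n : ℝ) * s n = 1 + ((2 * n : ℕ) : ℝ) * s n := by push_cast; ring
        _ ≤ (1 + s n) ^ (2 * n) := this
    have hprod : u n ^ (2 * n) * (1 + s n) ^ (2 * n) ≤ 1 := by
      rw [← mul_pow]
      have he : u n * (1 + s n) = 1 - s n ^ 2 := by simp [hsdef]; ring
      rw [he]
      exact pow_le_one₀ (by nlinarith [hs0 n, hs1 n]) (by nlinarith [hs0 n])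
    have h1n : (0:ℝ) ≤ 1 + (2 * n : ℝ) * s n := by
      have := hs0 n; positivity
    have : G / 2 * (1 + (2 * n : ℝ) * s n) ≤ 1 := by
      calc G / 2 * (1 + (2 * n : ℝ) * s n)
          ≤ u n ^ (2 * n) * (1 + s n) ^ (2 * n) :=
            mul_le_mul hn hb h1n (pow_nonneg (hu0 n) _)
        _ ≤ 1 := hprod
    rw [le_div_iff₀ hGpos]
    nlinarith
  -- s n → 0
  have h4 : Tendsto s atTop (nhds 0) := by
    have hupper : Tendsto (fun n : ℕ => (1 / G) / n) atTop (nhds 0) :=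
      tendsto_const_div_atTop_nhds_zero_nat _
    apply tendsto_of_tendsto_of_tendsto_of_le_of_le' tendsto_const_nhds hupper
    · filter_upwards with n; exact hs0 n
    · filter_upwards [h3, eventually_ge_atTop 1] with n hn hn1
      have hnpos : (0:ℝ) < n := by exact_mod_cast hn1
      rw [le_div_iff₀ hnpos, mul_comm]
      exact hn
  -- n * s n ^ 2 → 0
  have h5 : Tendsto (fun n : ℕ => (n : ℝ) * s n ^ 2) atTop (nhds 0) := by
    have hupper : Tendsto (fun n : ℕ => (1 / G) * s n) atTop (nhds 0) := by
      simpa using h4.const_mul (1 / G)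
    apply tendsto_of_tendsto_of_tendsto_of_le_of_le' tendsto_const_nhds hupper
    · filter_upwards with n; positivity
    · filter_upwards [h3] with n hn
      have := hs0 n
      nlinarith [mul_le_mul_of_nonneg_right hn this]
  -- eventually u n ≥ 3/4
  have h6 : ∀ᶠ n in atTop, 3 / 4 ≤ u n := by
    have := h4.eventually (eventually_le_nhds (by norm_num : (0:ℝ) < 1/4))
    filter_upwards [this] with n hn
    simp only [hsdef] at hn; linarith
  set t : ℕ → ℝ := fun n => (s n / u n) ^ 2 with htdef
  have ht0 : ∀ n, 0 ≤ t n := fun n => sq_nonneg _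
  clear_value t
  have htle : ∀ᶠ n in atTop, t n ≤ 2 * s n ^ 2 := by
    filter_upwards [h6] with n hn
    have hun : (0:ℝ) < u n := by linarith
    have heq : t n = s n ^ 2 / u n ^ 2 := by simp only [htdef, div_pow]
    rw [heq, div_le_iff₀ (by positivity)]
    have h12 : (1:ℝ)/2 ≤ u n ^ 2 := by nlinarith
    nlinarith [mul_le_mul_of_nonneg_left h12 (sq_nonneg (s n))]
  -- n * t n → 0
  have h7 : Tendsto (fun n : ℕ => (n : ℝ) * t n) atTop (nhds 0) := by
    have hupper : Tendsto (fun n : ℕ => 2 * ((n : ℝ) * s n ^ 2)) atTop (nhds 0) := by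
      simpa using h5.const_mul 2
    apply tendsto_of_tendsto_of_tendsto_of_le_of_le' tendsto_const_nhds hupper
    · filter_upwards with n; have := ht0 n; positivity
    · filter_upwards [htle] with n hn
      have : (0:ℝ) ≤ (n:ℝ) := Nat.cast_nonneg n
      nlinarith
  -- t n → 0, and eventually t n ≤ 1/2
  have htsmall : ∀ᶠ n in atTop, t n ≤ 1 / 2 := by
    have hs4 := h4.eventually (eventually_le_nhds (by norm_num : (0:ℝ) < 1/4))
    filter_upwards [htle, hs4] with n hn hn4
    have := hs0 n
    have hsq : s n ^ 2 ≤ 1 / 16 := by nlinarith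
    linarith
  -- (1 - t n)^n → 1
  have h8 : Tendsto (fun n : ℕ => (1 - t n) ^ n) atTop (nhds 1) := by
    have hlower : Tendsto (fun n : ℕ => 1 - (n : ℝ) * t n) atTop (nhds 1) := by
      have := (tendsto_const_nhds : Tendsto (fun _ : ℕ => (1:ℝ)) atTop (nhds 1)).sub h7
      simpa using this
    apply tendsto_of_tendsto_of_tendsto_of_le_of_le' hlower tendsto_const_nhds
    · filter_upwards [htsmall] with n hn
      have := one_add_mul_le_pow (by linarith [ht0 n] : (-2:ℝ) ≤ -t n) n
      calc 1 - (n:ℝ) * t n = 1 + (n:ℝ) * (-t n) := by ring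
        _ ≤ (1 + -t n) ^ n := this
        _ = (1 - t n) ^ n := by ring_nf
    · filter_upwards [htsmall] with n hn
      exact pow_le_one₀ (by linarith) (by linarith [ht0 n])
  -- combine
  have hfinal : Tendsto (fun n : ℕ => u n ^ (2 * n) * (1 - t n) ^ n)
      atTop (nhds G) := by
    simpa using h1.mul h8
  apply hfinal.congr'
  filter_upwards [h6] with n hn
  have hun : (0:ℝ) < u n := by linarith
  have key : u n ^ (2 * n) * (1 - t n) ^ n = (2 * u n - 1) ^ n := by
    have h2e : u n ^ (2 * n) = (u n ^ 2) ^ n := by rw [← pow_mul]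
    rw [h2e, ← mul_pow]
    congr 1
    have heq : t n = s n ^ 2 / u n ^ 2 := by simp only [htdef, div_pow]
    rw [heq]
    field_simp
    simp [hsdef]
    ring
  rw [key, hu]
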